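/- An allocation z maximizing the Nash product ∏_i U_i(z), where U_i(z) > 0 for all i, is envy-free: u_i · z_i ≥ u_i · z_j for all agents i, j, in the case of two agents. -/

import Mathlib

/-!
If agent `i` values `j`'s bundle at `B` above the value `A` of its own, hand `i` the share
`s = (B - A) / (2B)` of `j`'s bundle. Agent `i`'s utility becomes `A + sB` and `j`'s is scaled by
`1 - s`, while `(A + sB)(1 - s) = A + s(B - A)/2 > A`, so the Nash product strictly increases.
-/

def Feasible {n q : ℕ} (z : Fin n → Fin q → ℝ) : Prop :=
  (∀ i a, 0 ≤ z i a ∧ z i a ≤ 1) ∧ (∀ a, ∑ i, z i a = 1)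

def util {n q : ℕ} (u : Fin n → Fin q → ℝ) (z : Fin n → Fin q → ℝ) (i : Fin n) : ℝ :=
  ∑ a, u i a * z i a

open Finset

@[to_additive]
theorem prod_mul_eq_prod_mul_of_eq_off_pair {ι M : Type*} [Fintype ι] [DecidableEq ι]
    [CommMonoid M] {f g : ι → M} {i j : ι} (hij : i ≠ j)
    (hfg : ∀ k, k ≠ i → k ≠ j → g k = f k) :
    (∏ k, g k) * (f i * f j) = (∏ k, f k) * (g i * g j) := by
  have hj : j ∈ univ.erase i := mem_erase.2 ⟨hij.symm, mem_univ j⟩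
  have split (h : ι → M) : ∏ k, h k = h i * (h j * ∏ k ∈ (univ.erase i).erase j, h k) := by
    rw [mul_prod_erase _ h hj, mul_prod_erase _ h (mem_univ i)]
  have rest : ∏ k ∈ (univ.erase i).erase j, g k = ∏ k ∈ (univ.erase i).erase j, f k :=
    prod_congr rfl fun k hk => hfg k (ne_of_mem_erase (mem_of_mem_erase hk)) (ne_of_mem_erase hk)
  rw [split f, split g, rest]
  ac_rfl

theorem exists_mul_one_sub_gt {A B : ℝ} (hA : 0 < A) (hAB : A < B) :
    ∃ s, 0 ≤ s ∧ s ≤ 1 ∧ A < (A + s * B) * (1 - s) := by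
  have hB : 0 < B := hA.trans hAB
  refine ⟨(B - A) / (2 * B), by positivity, (div_le_one (by positivity)).2 (by linarith), ?_⟩
  have key : (A + (B - A) / (2 * B) * B) * (1 - (B - A) / (2 * B))
      = A + (B - A) ^ 2 / (4 * B) := by
    field_simp
    ring
  rw [key]
  have : 0 < (B - A) ^ 2 / (4 * B) := by
    have : 0 < B - A := by linarith
    positivity
  linarith

variable {n q : ℕ}

theorem Feasible.of_nonneg {z : Fin n → Fin q → ℝ} (hnonneg : ∀ i a, 0 ≤ z i a)
    (hsum : ∀ a, ∑ i, z i a = 1) : Feasible z :=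
  ⟨fun i a => ⟨hnonneg i a,
    hsum a ▸ single_le_sum (fun k _ => hnonneg k a) (mem_univ i)⟩, hsum⟩

def transfer (z : Fin n → Fin q → ℝ) (i j : Fin n) (s : ℝ) : Fin n → Fin q → ℝ :=
  fun k a => if k = i then z i a + s * z j a else if k = j then (1 - s) * z j a else z k a

variable {z : Fin n → Fin q → ℝ} {i j : Fin n} {s : ℝ}

theorem transfer_left : transfer z i j s i = fun a => z i a + s * z j a := by
  funext a
  simp [transfer]

theorem transfer_right (hij : i ≠ j) : transfer z i j s j = fun a => (1 - s) * z j a := by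
  funext a
  simp [transfer, hij.symm]

theorem transfer_of_ne {k : Fin n} (hki : k ≠ i) (hkj : k ≠ j) : transfer z i j s k = z k := by
  funext a
  simp [transfer, hki, hkj]

theorem feasible_transfer (hz : Feasible z) (hij : i ≠ j) (hs0 : 0 ≤ s) (hs1 : s ≤ 1) :
    Feasible (transfer z i j s) := by
  refine Feasible.of_nonneg (fun k a => ?_) (fun a => ?_)
  · have hi := (hz.1 i a).1
    have hj := (hz.1 j a).1
    have hk := (hz.1 k a).1
    unfold transfer
    split_ifs
    · positivity
    · exact mul_nonneg (by linarith) hj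
    · exact hk
  · have pair := sum_add_eq_sum_add_of_eq_off_pair (f := fun k => z k a)
      (g := fun k => transfer z i j s k a) hij
      fun k hki hkj => congrFun (transfer_of_ne hki hkj) a
    simp only [transfer_left, transfer_right hij] at pair
    linarith [hz.2 a]

variable {u : Fin n → Fin q → ℝ}

theorem util_transfer_left :
    util u (transfer z i j s) i = util u z i + s * ∑ a, u i a * z j a := by
  simp only [util, transfer_left, mul_add, sum_add_distrib, mul_sum]
  congr 1
  exact sum_congr rfl fun a _ => by ring

theorem util_transfer_right (hij : i ≠ j) :
    util u (transfer z i j s) j = (1 - s) * util u z j := by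
  simp only [util, transfer_right hij, mul_sum]
  exact sum_congr rfl fun a _ => by ring

theorem util_transfer_of_ne {k : Fin n} (hki : k ≠ i) (hkj : k ≠ j) :
    util u (transfer z i j s) k = util u z k := by
  simp only [util, transfer_of_ne hki hkj]

theorem envy_free_of_nash_optimal (hz : Feasible z) (hpos : ∀ i, 0 < util u z i)
    (hopt : ∀ z', Feasible z' → ∏ i, util u z' i ≤ ∏ i, util u z i) (i j : Fin n) :
    ∑ a, u i a * z j a ≤ util u z i := by
  rcases eq_or_ne i j with rfl | hij
  · exact le_rfl
  by_contra! hB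
  obtain ⟨s, hs0, hs1, hgain⟩ := exists_mul_one_sub_gt (hpos i) hB
  have pair := prod_mul_eq_prod_mul_of_eq_off_pair (f := util u z)
    (g := util u (transfer z i j s)) hij fun k hki hkj => util_transfer_of_ne hki hkj
  rw [util_transfer_left, util_transfer_right hij] at pair
  have hle := mul_le_mul_of_nonneg_right (hopt _ (feasible_transfer hz hij hs0 hs1))
    (mul_pos (hpos i) (hpos j)).le
  rw [pair] at hle
  have hprod : 0 < ∏ k, util u z k := prod_pos fun k _ => hpos k
  have hlt : util u z i * util u z j
      < (util u z i + s * ∑ a, u i a * z j a) * ((1 - s) * util u z j) := by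
    rw [← mul_assoc]
    exact mul_lt_mul_of_pos_right hgain (hpos j)
  linarith [mul_lt_mul_of_pos_left hlt hprod]

theorem nash_envy_free_two_agents_general {q : ℕ} (u : Fin 2 → Fin q → ℝ)
    (z : Fin 2 → Fin q → ℝ) (hz : Feasible z)
    (hpos : ∀ i, 0 < util u z i)
    (hopt : ∀ z', Feasible z' → ∏ i, util u z' i ≤ ∏ i, util u z i) :
    ∀ i j : Fin 2, ∑ a, u i a * z j a ≤ ∑ a, u i a * z i a :=
  envy_free_of_nash_optimal hz hpos hopt

theorem nash_envy_free_two_agents {q : ℕ} (u : Fin 2 → Fin q → ℝ)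
    (hu : ∀ i a, 0 ≤ u i a)
    (z : Fin 2 → Fin q → ℝ) (hz : Feasible z)
    (hpos : ∀ i, 0 < util u z i)
    (hopt : ∀ z', Feasible z' → ∏ i, util u z' i ≤ ∏ i, util u z i) :
    ∀ i j : Fin 2, ∑ a, u i a * z j a ≤ ∑ a, u i a * z i a :=
  nash_envy_free_two_agents_general u z hz hpos hopt
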